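/- Let (f_m : T → R) be an A-compatible sequence with limit F : T̂ → R̂. Then for every k, the induced map F_* on differentials agrees with (f_k)_* on the space of invariant differential forms Ω^inv_A of A, viewed inside Ω_{T̂}. -/

import Mathlib

/-!
Write `Φₘ` for the pushforward along `F m`. Since `F (m + 1) = F m + (F (m + 1) - F m)` and `ω` is
invariant, `Φₘ₊₁ ω = Φₘ ω + (F (m + 1) - F m)_* ω`, and the last term vanishes: `F (m + 1) - F m`
takes values in `p ^ (m + 1)`-th powers, which `d` kills. Hence `Φₘ ω` does not depend on `m`.
On the other hand `G - F m` takes values in the ideal `J` generated by `p ^ m`-th powers of `𝔪`;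
as `d` kills these generators, `G_* ω - Φₘ ω ∈ J • Ω[S⁄C] ⊆ 𝔪 ^ m • Ω[S⁄C]` for all `m`. By Krull's intersection
theorem this forces `G_* ω = Φₘ ω`, provided `Ω[S⁄C]` is finitely generated. That holds because
`S = ∑_{α < p} S ^ p x ^ α` for generators `x` of `𝔪`, so the `d xᵢ` generate `Ω[S⁄C]`; this
decomposition holds modulo `𝔪 ^ K`, which lies in the ideal generated by `p`-th powers of `𝔪`, by
successive approximation, and then exactly by complete Nakayama for `S` viewed as a module over
itself through Frobenius.
-/

open IsLocalRing

universe u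

/-- `φ` is the pushforward map on Kähler differentials induced by the algebra map `f`
(an additive map determined by `φ (a • d h) = f a • d (f h)`). -/
def IsPushforward (C : Type u) [Field C] {H T : Type u} [CommRing H] [Algebra C H]
    [CommRing T] [Algebra C T] (f : H →ₐ[C] T)
    (φ : Ω[H⁄C] →+ Ω[T⁄C]) : Prop :=
  ∀ a h : H, φ (a • KaehlerDifferential.D C H h) = f a • KaehlerDifferential.D C T (f h)

section PiPrecomplete

variable {R : Type*} [CommRing R] {κ : Type*} {M : κ → Type*} [∀ k, AddCommGroup (M k)]
  [∀ k, Module R (M k)]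

theorem Submodule.mem_smul_top_pi_iff [Finite κ] {J : Ideal R} {v : ∀ k, M k} :
    v ∈ (J • ⊤ : Submodule R (∀ k, M k)) ↔ ∀ k, v k ∈ (J • ⊤ : Submodule R (M k)) := by
  classical
  have := Fintype.ofFinite κ
  refine ⟨fun hv k => ?_, fun hv => ?_⟩
  · exact Submodule.smul_induction_on (p := fun v => v k ∈ (J • ⊤ : Submodule R (M k))) hv
      (fun _ hr _ _ => Submodule.smul_mem_smul hr Submodule.mem_top) (fun _ _ => add_mem)
  · rw [← Finset.univ_sum_single v]
    refine sum_mem fun k _ => ?_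
    have h := Submodule.mem_map_of_mem (f := LinearMap.single R M k) (hv k)
    rw [Submodule.map_smul''] at h
    exact Submodule.smul_mono le_rfl le_top h

instance IsPrecomplete.pi {I : Ideal R} [Finite κ] [∀ k, IsPrecomplete I (M k)] :
    IsPrecomplete I (∀ k, M k) := by
  refine ⟨fun f hf => ?_⟩
  choose L hL using fun k => IsPrecomplete.prec (I := I) inferInstance (f := fun n => f n k)
    fun hmn => SModEq.sub_mem.mpr (Submodule.mem_smul_top_pi_iff.mp (SModEq.sub_mem.mp (hf hmn)) k)
  exact ⟨L, fun n => SModEq.sub_mem.mpr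
    (Submodule.mem_smul_top_pi_iff.mpr fun k => SModEq.sub_mem.mp (hL k n))⟩

end PiPrecomplete

theorem Ideal.span_pow_image_le_pow {R : Type*} [CommRing R] (I : Ideal R) {m n : ℕ}
    (h : n ≤ m) : Ideal.span ((· ^ m) '' (I : Set R)) ≤ I ^ n :=
  Ideal.span_le.mpr fun _ ⟨_, hs, hsm⟩ => hsm ▸ Ideal.pow_le_pow_right h (Ideal.pow_mem_pow hs m)

section Derivation

variable {R A M : Type*} [CommRing R] [CommRing A] [Algebra R A] [AddCommGroup M] [Module A M]
  [Module R M] (D : Derivation R A M)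

theorem Derivation.map_pow_char (p : ℕ) [CharP A p] (a : A) : D (a ^ p) = 0 := by
  rw [Derivation.leibniz_pow, ← Nat.cast_smul_eq_nsmul A, CharP.cast_eq_zero, zero_smul]

theorem Derivation.map_pow_char_pow_succ (p : ℕ) [CharP A p] (a : A) (e : ℕ) :
    D (a ^ p ^ (e + 1)) = 0 := by
  rw [pow_succ, pow_mul, D.map_pow_char p]

theorem Derivation.map_mem_span_smul_top [IsScalarTower R A M] {T : Set A}
    (hT : ∀ t ∈ T, D t = 0) {z : A} (hz : z ∈ Ideal.span T) :
    D z ∈ Ideal.span T • (⊤ : Submodule A M) := by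
  induction hz using Submodule.span_induction with
  | mem t ht => rw [hT t ht]; exact zero_mem _
  | zero => rw [D.map_zero]; exact zero_mem _
  | add a b _ _ ha hb => rw [D.map_add]; exact add_mem ha hb
  | smul a b hb ihb =>
    rw [smul_eq_mul, D.leibniz]
    exact add_mem (Submodule.smul_mem _ _ ihb) (Submodule.smul_mem_smul hb Submodule.mem_top)

end Derivation

theorem KaehlerDifferential.mem_of_forall_smul_D_mem {R A : Type*} [CommRing R] [CommRing A]
    [Algebra R A] (G : AddSubmonoid (Ω[A⁄R]))
    (h : ∀ a b : A, a • KaehlerDifferential.D R A b ∈ G) (ξ : Ω[A⁄R]) : ξ ∈ G := by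
  have hξ : ξ ∈ Submodule.span A (Set.range (KaehlerDifferential.D R A)) := by
    rw [KaehlerDifferential.span_range_derivation]; trivial
  obtain ⟨c, rfl⟩ := Finsupp.mem_span_range_iff_exists_finsupp.mp hξ
  exact sum_mem fun b _ => h _ _

section FrobeniusTwist

def FrobeniusTwist (S : Type*) (_p : ℕ) : Type _ := S

variable {S : Type*} [CommRing S] {p : ℕ} [ExpChar S p]

instance : AddCommGroup (FrobeniusTwist S p) := inferInstanceAs (AddCommGroup S)

instance : Module S (FrobeniusTwist S p) := Module.compHom S (frobenius S p)

namespace FrobeniusTwist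

variable (S p) in
def of : S ≃+ FrobeniusTwist S p := AddEquiv.refl S

theorem smul_of (r s : S) : r • of S p s = of S p (r ^ p * s) := rfl

theorem symm_smul (r : S) (v : FrobeniusTwist S p) :
    (of S p).symm (r • v) = r ^ p * (of S p).symm v := rfl

variable {J : Ideal S} {v : FrobeniusTwist S p}

theorem symm_mem_of_mem_smul_top (hv : v ∈ (J • ⊤ : Submodule S (FrobeniusTwist S p))) :
    (of S p).symm v ∈ J :=
  Submodule.smul_induction_on (p := fun v => (of S p).symm v ∈ J) hv
    (fun _ hr _ _ => J.mul_mem_right _ (J.pow_mem_of_mem hr p (expChar_pos S p)))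
    (fun v w hv hw => by rw [map_add]; exact J.add_mem hv hw)

theorem mul_symm_mem_smul_top (a : S) (hv : v ∈ (J • ⊤ : Submodule S (FrobeniusTwist S p))) :
    of S p (a * (of S p).symm v) ∈ (J • ⊤ : Submodule S (FrobeniusTwist S p)) := by
  refine Submodule.smul_induction_on
    (p := fun v => of S p (a * (of S p).symm v) ∈ (J • ⊤ : Submodule S (FrobeniusTwist S p))) hv
    (fun r hr w _ => ?_) (fun v w hv hw => ?_)
  · have h := Submodule.smul_mem_smul hr (Submodule.mem_top (x := of S p (a * (of S p).symm w)))
    rwa [smul_of, mul_left_comm, ← symm_smul] at h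
  · simpa only [map_add, mul_add] using add_mem hv hw

theorem of_mem_smul_top_of_mem_span {s : S} (hs : s ∈ Ideal.span ((· ^ p) '' (J : Set S))) :
    of S p s ∈ (J • ⊤ : Submodule S (FrobeniusTwist S p)) := by
  induction hs using Submodule.span_induction with
  | mem _ h =>
    obtain ⟨r, hr, rfl⟩ := h
    have h := Submodule.smul_mem_smul hr (Submodule.mem_top (x := of S p 1))
    rwa [smul_of, mul_one] at h
  | zero => simp
  | add _ _ _ _ h₁ h₂ => rw [map_add]; exact add_mem h₁ h₂
  | smul a s _ h => simpa using mul_symm_mem_smul_top a h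

instance (I : Ideal S) [IsHausdorff I S] : IsHausdorff I (FrobeniusTwist S p) := by
  refine ⟨fun v hv => (of S p).symm.injective ?_⟩
  rw [map_zero]
  refine IsHausdorff.haus (I := I) inferInstance _ fun n => SModEq.zero.mpr ?_
  rw [smul_eq_mul, Ideal.mul_top]
  exact symm_mem_of_mem_smul_top (SModEq.zero.mp (hv n))

end FrobeniusTwist

end FrobeniusTwist

section FrobeniusMonomials

variable {S : Type*} [CommRing S] (p : ℕ) [ExpChar S p] {ι : Type*} [Fintype ι] [DecidableEq ι]
  (x : ι → S)

/-- Its surjectivity says that the monomials `x ^ α` with all `α i < p` generate `S` as a module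
over the subring of `p`-th powers. -/
def frobeniusMonomialSum : ((ι → Fin p) → S) →+ S where
  toFun L := ∑ α, L α ^ p * ∏ i, x i ^ (α i : ℕ)
  map_zero' := by simp [zero_pow (expChar_ne_zero S p)]
  map_add' L L' := by
    simp only [Pi.add_apply, add_pow_expChar, add_mul, Finset.sum_add_distrib]

variable {p x}

theorem frobeniusMonomialSum_smul (r : S) (L : (ι → Fin p) → S) :
    frobeniusMonomialSum p x (r • L) = r ^ p * frobeniusMonomialSum p x L := by
  simp only [frobeniusMonomialSum, AddMonoidHom.coe_mk, ZeroHom.coe_mk, Pi.smul_apply,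
    smul_eq_mul, mul_pow, Finset.mul_sum, mul_assoc]

theorem frobeniusMonomialSum_single (α : ι → Fin p) (c : S) :
    frobeniusMonomialSum p x (Pi.single α c) = c ^ p * ∏ i, x i ^ (α i : ℕ) := by
  refine (Finset.sum_eq_single α (fun β _ hβ => ?_) (by simp)).trans ?_
  · rw [Pi.single_eq_of_ne hβ, zero_pow (expChar_ne_zero S p), zero_mul]
  · rw [Pi.single_eq_same]

theorem pow_mul_mem_range_frobeniusMonomialSum (r : S) {s : S}
    (hs : s ∈ (frobeniusMonomialSum p x).range) :
    r ^ p * s ∈ (frobeniusMonomialSum p x).range := by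
  obtain ⟨L, rfl⟩ := hs
  exact ⟨r • L, frobeniusMonomialSum_smul r L⟩

theorem prod_pow_mem_range_frobeniusMonomialSum (γ : ι → ℕ) :
    ∏ i, x i ^ γ i ∈ (frobeniusMonomialSum p x).range := by
  have hp : 0 < p := expChar_pos S p
  refine ⟨Pi.single (fun i => ⟨γ i % p, Nat.mod_lt _ hp⟩) (∏ i, x i ^ (γ i / p)), ?_⟩
  rw [frobeniusMonomialSum_single, ← Finset.prod_pow, ← Finset.prod_mul_distrib]
  refine Finset.prod_congr rfl fun i _ => ?_
  rw [← pow_mul, ← pow_add, mul_comm, Nat.div_add_mod]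

theorem prod_pow_mul_mem_range_frobeniusMonomialSum (γ : ι → ℕ) {s : S}
    (hs : s ∈ (frobeniusMonomialSum p x).range) :
    (∏ i, x i ^ γ i) * s ∈ (frobeniusMonomialSum p x).range := by
  obtain ⟨L, rfl⟩ := hs
  change _ * ∑ α, _ ∈ _
  rw [Finset.mul_sum]
  refine sum_mem fun α _ => ?_
  rw [mul_left_comm, ← Finset.prod_mul_distrib]
  simp only [← pow_add]
  exact pow_mul_mem_range_frobeniusMonomialSum _ (prod_pow_mem_range_frobeniusMonomialSum _)

theorem mul_mem_range_frobeniusMonomialSum (i : ι) {s : S}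
    (hs : s ∈ (frobeniusMonomialSum p x).range) :
    x i * s ∈ (frobeniusMonomialSum p x).range := by
  simpa [Pi.single_apply] using prod_pow_mul_mem_range_frobeniusMonomialSum (Pi.single i 1) hs

variable {C : Type*} [Field C] [ExpChar C p] [PerfectRing C p] [Algebra C S]

theorem algebraMap_mem_range_frobeniusMonomialSum (c : C) :
    algebraMap C S c ∈ (frobeniusMonomialSum p x).range := by
  have h := pow_mul_mem_range_frobeniusMonomialSum (algebraMap C S ((frobeniusEquiv C p).symm c))
    (prod_pow_mem_range_frobeniusMonomialSum (p := p) (x := x) 0)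
  rw [← map_pow, frobeniusEquiv_symm_pow_p] at h
  simpa only [Pi.zero_apply, pow_zero, Finset.prod_const_one, mul_one] using h

variable [IsLocalRing S]

theorem pow_le_range_frobeniusMonomialSum_sup_pow_succ
    (hres : Function.Surjective (algebraMap C (ResidueField S)))
    (hx : Ideal.span (Set.range x) = maximalIdeal S) (k : ℕ) :
    (maximalIdeal S ^ k).toAddSubgroup ≤
      (frobeniusMonomialSum p x).range ⊔ (maximalIdeal S ^ (k + 1)).toAddSubgroup := by
  induction k with
  | zero =>
    intro s _
    obtain ⟨c, hc⟩ := hres (residue S s)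
    refine AddSubgroup.mem_sup.mpr ⟨_, algebraMap_mem_range_frobeniusMonomialSum c,
      s - algebraMap C S c, ?_, add_sub_cancel _ _⟩
    rw [zero_add, pow_one]
    exact (residue_eq_zero_iff _).mp (by rw [map_sub, ← hc]; exact sub_self _)
  | succ k ih =>
    have hmul : ∀ i, ∀ s ∈ (frobeniusMonomialSum p x).range ⊔
        (maximalIdeal S ^ (k + 1)).toAddSubgroup,
        x i * s ∈ (frobeniusMonomialSum p x).range ⊔ (maximalIdeal S ^ (k + 2)).toAddSubgroup := by
      intro i s hs
      obtain ⟨v, hv, w, hw, rfl⟩ := AddSubgroup.mem_sup.mp hs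
      rw [mul_add]
      refine add_mem (AddSubgroup.mem_sup_left (mul_mem_range_frobeniusMonomialSum i hv))
        (AddSubgroup.mem_sup_right ?_)
      rw [pow_succ' _ (k + 1)]
      exact Ideal.mul_mem_mul (hx ▸ Ideal.subset_span (Set.mem_range_self i)) hw
    intro s hs
    rw [Submodule.mem_toAddSubgroup, pow_succ] at hs
    refine Submodule.mul_induction_on hs (fun a ha b hb => ?_) (fun _ _ => add_mem)
    obtain ⟨t, rfl⟩ := (Submodule.mem_span_range_iff_exists_fun S).mp (hx ▸ hb)
    rw [Finset.mul_sum]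
    refine sum_mem fun i _ => ?_
    rw [smul_eq_mul, mul_comm (t i), mul_left_comm]
    exact hmul i _ (ih (Ideal.mul_mem_right _ _ ha))

theorem mem_range_frobeniusMonomialSum_sup_pow
    (hres : Function.Surjective (algebraMap C (ResidueField S)))
    (hx : Ideal.span (Set.range x) = maximalIdeal S) (k : ℕ) (s : S) :
    s ∈ (frobeniusMonomialSum p x).range ⊔ (maximalIdeal S ^ k).toAddSubgroup := by
  induction k with
  | zero => exact AddSubgroup.mem_sup_right (by simp)
  | succ k ih =>
    exact sup_le le_sup_left (pow_le_range_frobeniusMonomialSum_sup_pow_succ hres hx k) ih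

theorem frobeniusMonomialSum_surjective [IsNoetherianRing S] [IsAdicComplete (maximalIdeal S) S]
    (hres : Function.Surjective (algebraMap C (ResidueField S)))
    (hx : Ideal.span (Set.range x) = maximalIdeal S) :
    Function.Surjective (frobeniusMonomialSum p x) := by
  obtain ⟨K, hK⟩ : ∃ K, maximalIdeal S ^ K ≤ Ideal.span ((· ^ p) '' (maximalIdeal S : Set S)) :=
    Ideal.exists_pow_le_of_le_radical_of_fg (fun r hr => ⟨p, Ideal.subset_span ⟨r, hr, rfl⟩⟩)
      (IsNoetherian.noetherian _)
  let f : ((ι → Fin p) → S) →ₗ[S] FrobeniusTwist S p :=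
    { toFun L := FrobeniusTwist.of S p (frobeniusMonomialSum p x L)
      map_add' := by simp
      map_smul' r L := by simp [frobeniusMonomialSum_smul, FrobeniusTwist.smul_of] }
  have hf : Function.Surjective f := by
    refine surjective_of_mkQ_comp_surjective (I := maximalIdeal S) fun y => ?_
    obtain ⟨s, rfl⟩ := (Submodule.mkQ_surjective _).comp (FrobeniusTwist.of S p).surjective y
    obtain ⟨_, ⟨L, rfl⟩, w, hw, hsum⟩ :=
      AddSubgroup.mem_sup.mp (mem_range_frobeniusMonomialSum_sup_pow (p := p) hres hx K s)
    refine ⟨L, (Submodule.Quotient.eq _).mpr ?_⟩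
    change FrobeniusTwist.of S p _ - FrobeniusTwist.of S p s ∈ _
    rw [← map_sub, ← hsum, sub_add_cancel_left]
    exact FrobeniusTwist.of_mem_smul_top_of_mem_span (hK (neg_mem hw))
  intro s
  obtain ⟨L, hL⟩ := hf (FrobeniusTwist.of S p s)
  exact ⟨L, (FrobeniusTwist.of S p).injective hL⟩

end FrobeniusMonomials

section KaehlerFinite

variable {C S : Type*} [CommRing S] {p : ℕ} [Fact p.Prime] [CharP S p]

theorem KaehlerDifferential.span_range_D_eq_top_of_surjective [CommRing C] [Algebra C S]
    {ι : Type*} [Fintype ι] [DecidableEq ι] {x : ι → S}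
    (hx : Function.Surjective (frobeniusMonomialSum p x)) :
    Submodule.span S (Set.range fun i => KaehlerDifferential.D C S (x i)) = ⊤ := by
  set N := Submodule.span S (Set.range fun i => KaehlerDifferential.D C S (x i))
  rw [eq_top_iff, ← KaehlerDifferential.span_range_derivation C S, Submodule.span_le]
  rintro _ ⟨s, rfl⟩
  obtain ⟨L, rfl⟩ := hx s
  simp only [frobeniusMonomialSum, AddMonoidHom.coe_mk, ZeroHom.coe_mk, map_sum]
  refine sum_mem fun α _ => ?_
  rw [Derivation.leibniz, Derivation.map_pow_char, smul_zero, add_zero]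
  refine Submodule.smul_mem _ _ (Finset.prod_induction _ (fun s => KaehlerDifferential.D C S s ∈ N)
    (fun a b ha hb => ?_) (by simp) fun i _ => ?_)
  · rw [Derivation.leibniz]
    exact add_mem (N.smul_mem _ hb) (N.smul_mem _ ha)
  · rw [Derivation.leibniz_pow]
    exact N.smul_of_tower_mem _ (N.smul_mem _ (Submodule.subset_span ⟨i, rfl⟩))

theorem KaehlerDifferential.finite_of_isAdicComplete [Field C] [Algebra C S] [CharP C p]
    [PerfectRing C p] [IsLocalRing S] [IsNoetherianRing S] [IsAdicComplete (maximalIdeal S) S]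
    (hres : Function.Surjective (algebraMap C (ResidueField S))) :
    Module.Finite S (Ω[S⁄C]) := by
  obtain ⟨n, x, hx⟩ :=
    Submodule.fg_iff_exists_fin_generating_family.mp (IsNoetherian.noetherian (maximalIdeal S))
  have := span_range_D_eq_top_of_surjective (C := C) (frobeniusMonomialSum_surjective hres hx)
  exact ⟨this ▸ Submodule.fg_span (Set.finite_range _)⟩

end KaehlerFinite

section Pushforward

variable {C : Type u} [Field C] {H S : Type u} [CommRing H] [Algebra C H] [CommRing S]
  [Algebra C S] {f g : H →ₐ[C] S} {φ ψ : Ω[H⁄C] →+ Ω[S⁄C]}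

theorem exists_isPushforward (f : H →ₐ[C] S) :
    ∃ φ : Ω[H⁄C] →+ Ω[S⁄C], IsPushforward C f φ := by
  let : Algebra H S := f.toAlgebra
  have : IsScalarTower C H S := IsScalarTower.of_algebraMap_eq fun c => (f.commutes c).symm
  refine ⟨(KaehlerDifferential.map C C H S).toAddMonoidHom, fun a h => ?_⟩
  change KaehlerDifferential.map C C H S (a • KaehlerDifferential.D C H h) = _
  rw [map_smul, KaehlerDifferential.map_D, algebra_compatible_smul S a]
  rfl

theorem IsPushforward.unique (hφ : IsPushforward C f φ) (hψ : IsPushforward C f ψ) : φ = ψ :=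
  AddMonoidHom.ext <| KaehlerDifferential.mem_of_forall_smul_D_mem (AddMonoidHom.eqLocusM φ ψ)
    fun a b => (hφ a b).trans (hψ a b).symm

theorem IsPushforward.eq_zero (hφ : IsPushforward C f φ)
    (hf : ∀ h, KaehlerDifferential.D C S (f h) = 0) : φ = 0 :=
  AddMonoidHom.ext <| KaehlerDifferential.mem_of_forall_smul_D_mem (AddMonoidHom.eqLocusM φ 0)
    fun a b => by simp [hφ a b, hf b]

theorem IsPushforward.eq_zero_of_eq_pow {p : ℕ} [CharP S p] (hφ : IsPushforward C f φ) (e : ℕ)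
    (hf : ∀ h, ∃ s : S, f h = s ^ p ^ (e + 1)) : φ = 0 :=
  hφ.eq_zero fun h => by
    obtain ⟨s, hs⟩ := hf h
    rw [hs, Derivation.map_pow_char_pow_succ]

theorem IsPushforward.eq_zero_of_comp_ofId {ε : H →ₐ[C] C}
    (hφ : IsPushforward C ((Algebra.ofId C S).comp ε) φ) : φ = 0 :=
  hφ.eq_zero fun _ => (KaehlerDifferential.D C S).map_algebraMap _

theorem IsPushforward.sub_mem_smul_top (hf : IsPushforward C f φ) (hg : IsPushforward C g ψ)
    {I : Ideal S} (hI : ∀ z ∈ I, KaehlerDifferential.D C S z ∈ I • (⊤ : Submodule S (Ω[S⁄C])))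
    (hfg : ∀ h, g h - f h ∈ I) (ξ : Ω[H⁄C]) : ψ ξ - φ ξ ∈ I • (⊤ : Submodule S (Ω[S⁄C])) := by
  refine KaehlerDifferential.mem_of_forall_smul_D_mem
    ((I • ⊤ : Submodule S (Ω[S⁄C])).toAddSubmonoid.comap (ψ - φ)) (fun a b => ?_) ξ
  change ψ (a • _) - φ (a • _) ∈ (I • ⊤ : Submodule S (Ω[S⁄C]))
  rw [hf, hg, show g a • KaehlerDifferential.D C S (g b) - f a • KaehlerDifferential.D C S (f b) =
    (g a - f a) • KaehlerDifferential.D C S (g b) + f a • KaehlerDifferential.D C S (g b - f b) by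
      rw [map_sub, sub_smul, smul_sub]; abel]
  exact add_mem (Submodule.smul_mem_smul (hfg a) Submodule.mem_top)
    (Submodule.smul_mem _ _ (hI _ (hfg b)))

end Pushforward

theorem stmt16_general
    (C : Type u) [Field C] (p : ℕ) [Fact p.Prime] [CharP C p] [PerfectRing C p]
    (H : Type u) [CommRing H] [Algebra C H]
    (S : Type u) [CommRing S] [Algebra C S] [IsLocalRing S] [IsNoetherianRing S]
    [IsAdicComplete (maximalIdeal S) S]
    (hresS : Function.Bijective (algebraMap C (ResidueField S)))
    -- the counit of `H` (the residue map)
    (ε : H →ₐ[C] C)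
    -- the group structure on points of the complete Hopf algebra `H`
    (add : ∀ (T : Type u) [CommRing T] [IsLocalRing T] [Algebra C T] [IsNoetherianRing T]
      [IsAdicComplete (maximalIdeal T) T],
      (H →ₐ[C] T) → (H →ₐ[C] T) → (H →ₐ[C] T))
    (neg : ∀ (T : Type u) [CommRing T] [IsLocalRing T] [Algebra C T] [IsNoetherianRing T]
      [IsAdicComplete (maximalIdeal T) T],
      (H →ₐ[C] T) → (H →ₐ[C] T))
    (hneg : ∀ (T : Type u) [CommRing T] [IsLocalRing T] [Algebra C T] [IsNoetherianRing T]
      [IsAdicComplete (maximalIdeal T) T] (F : H →ₐ[C] T),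
      add T F (neg T F) = (Algebra.ofId C T).comp ε)
    -- the `A`-compatible sequence
    (F : ℕ → (H →ₐ[C] S))
    (hcompat : ∀ (m : ℕ) (h : H), ∃ s : S,
      (add S (F (m + 1)) (neg S (F m))) h = s ^ p ^ (m + 1))
    -- the limit `G` of the sequence
    (G : H →ₐ[C] S)
    (hlim : ∀ (m : ℕ) (h : H), G h - F m h ∈
      Ideal.span ((fun s : S => s ^ p ^ m) '' (maximalIdeal S : Set S)))
    -- `ω` is an invariant differential form of `A`
    (ω : Ω[H⁄C])
    (hω : ∀ (T : Type u) [CommRing T] [IsLocalRing T] [Algebra C T] [IsNoetherianRing T]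
      [IsAdicComplete (maximalIdeal T) T] (G₁ G₂ : H →ₐ[C] T)
      (φ₁ φ₂ φ₃ : Ω[H⁄C] →+ Ω[T⁄C]),
      IsPushforward C G₁ φ₁ → IsPushforward C G₂ φ₂ → IsPushforward C (add T G₁ G₂) φ₃ →
        φ₃ ω = φ₁ ω + φ₂ ω) :
    -- the limit and each term of the sequence act in the same way on `ω`
    ∀ (k : ℕ) (φG φk : Ω[H⁄C] →+ Ω[S⁄C]),
      IsPushforward C G φG → IsPushforward C (F k) φk → φG ω = φk ω := by
  intro k φG φk hφG hφk
  have : CharP S p := charP_of_injective_algebraMap (algebraMap C S).injective p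
  have := KaehlerDifferential.finite_of_isAdicComplete hresS.2
  choose Φ hΦ using fun m => exists_isPushforward (F m)
  -- both `F (m + 1) + (-F m)` and `F m + (-F m)` push `ω` to `0`; cancel `(-F m)_* ω`
  have hstep : ∀ m, Φ (m + 1) ω = Φ m ω := fun m => by
    obtain ⟨ψ, hψ⟩ := exists_isPushforward (neg S (F m))
    obtain ⟨χ, hχ⟩ := exists_isPushforward (add S (F (m + 1)) (neg S (F m)))
    obtain ⟨ζ, hζ⟩ := exists_isPushforward (add S (F m) (neg S (F m)))
    have h₁ := hω S _ _ _ _ _ (hΦ (m + 1)) hψ hχ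
    have h₂ := hω S _ _ _ _ _ (hΦ m) hψ hζ
    rw [hneg] at hζ
    rw [hχ.eq_zero_of_eq_pow m (hcompat m), AddMonoidHom.zero_apply] at h₁
    rw [hζ.eq_zero_of_comp_ofId, AddMonoidHom.zero_apply] at h₂
    exact add_right_cancel (h₁.symm.trans h₂)
  have hconst : ∀ m, Φ m ω = Φ 0 ω := Nat.rec rfl fun m ih => (hstep m).trans ih
  rw [hφk.unique (hΦ k), ← sub_eq_zero]
  refine IsHausdorff.haus (I := maximalIdeal S) inferInstance _ fun N => SModEq.zero.mpr ?_
  rw [hconst k, ← hconst (N + 1)]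
  set J := Ideal.span ((· ^ p ^ (N + 1)) '' (maximalIdeal S : Set S))
  have hD : ∀ z ∈ J, KaehlerDifferential.D C S z ∈ J • (⊤ : Submodule S (Ω[S⁄C])) :=
    fun _ => (KaehlerDifferential.D C S).map_mem_span_smul_top <| by
      rintro _ ⟨s, -, rfl⟩
      exact Derivation.map_pow_char_pow_succ _ p s N
  have hJ : J ≤ maximalIdeal S ^ N :=
    Ideal.span_pow_image_le_pow _ (N.le_succ.trans (Nat.lt_pow_self (Fact.out : p.Prime).one_lt).le)
  exact Submodule.smul_mono_left hJ ((hΦ (N + 1)).sub_mem_smul_top hφG hD (hlim (N + 1)) ω)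

/-- Let `(f_m : T → R)` be an `A`-compatible sequence with limit
`F = G : T̂ → R̂`.  Then for every `k`, the induced map `F_*` on differentials agrees with
`(f_k)_*` on the invariant differential forms of `A`.  Here `A` is a commutative algebraic
group over a perfect field `C` of characteristic `p > 0`; the complete Hopf algebra `H` is
the completion of `T = O_{A,0}` (with its group structure `add`/`neg` on points into complete
local Noetherian `C`-algebras, identity the counit `ε`), `S` is the completion of `R`, and an
invariant form is an element `ω` of the differentials of `H` whose pullback is additive for
sums of points of `A` (the characterizing property of invariant forms). -/
theorem stmt16
    (C : Type u) [Field C] (p : ℕ) [Fact p.Prime] [CharP C p] [PerfectRing C p]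
    (H : Type u) [CommRing H] [Algebra C H] [IsLocalRing H] [IsNoetherianRing H]
    [IsAdicComplete (maximalIdeal H) H]
    (hresH : Function.Bijective (algebraMap C (ResidueField H)))
    (S : Type u) [CommRing S] [Algebra C S] [IsLocalRing S] [IsNoetherianRing S]
    [IsAdicComplete (maximalIdeal S) S] [ExpChar S p]
    (hresS : Function.Bijective (algebraMap C (ResidueField S)))
    -- the counit of `H` (the residue map)
    (ε : H →ₐ[C] C) (hε : ∀ h ∈ maximalIdeal H, ε h = 0)
    -- the group structure on points of the complete Hopf algebra `H`
    (add : ∀ (T : Type u) [CommRing T] [IsLocalRing T] [Algebra C T] [IsNoetherianRing T]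
      [IsAdicComplete (maximalIdeal T) T],
      (H →ₐ[C] T) → (H →ₐ[C] T) → (H →ₐ[C] T))
    (neg : ∀ (T : Type u) [CommRing T] [IsLocalRing T] [Algebra C T] [IsNoetherianRing T]
      [IsAdicComplete (maximalIdeal T) T],
      (H →ₐ[C] T) → (H →ₐ[C] T))
    (hcomm : ∀ (T : Type u) [CommRing T] [IsLocalRing T] [Algebra C T] [IsNoetherianRing T]
      [IsAdicComplete (maximalIdeal T) T] (F G : H →ₐ[C] T), add T F G = add T G F)
    (hassoc : ∀ (T : Type u) [CommRing T] [IsLocalRing T] [Algebra C T] [IsNoetherianRing T]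
      [IsAdicComplete (maximalIdeal T) T] (F G K : H →ₐ[C] T),
      add T (add T F G) K = add T F (add T G K))
    (hzero : ∀ (T : Type u) [CommRing T] [IsLocalRing T] [Algebra C T] [IsNoetherianRing T]
      [IsAdicComplete (maximalIdeal T) T] (F : H →ₐ[C] T),
      add T F ((Algebra.ofId C T).comp ε) = F)
    (hneg : ∀ (T : Type u) [CommRing T] [IsLocalRing T] [Algebra C T] [IsNoetherianRing T]
      [IsAdicComplete (maximalIdeal T) T] (F : H →ₐ[C] T),
      add T F (neg T F) = (Algebra.ofId C T).comp ε)
    (hnat : ∀ (T T' : Type u) [CommRing T] [IsLocalRing T] [Algebra C T] [IsNoetherianRing T]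
      [IsAdicComplete (maximalIdeal T) T] [CommRing T'] [IsLocalRing T'] [Algebra C T']
      [IsNoetherianRing T'] [IsAdicComplete (maximalIdeal T') T']
      (φ : T →ₐ[C] T') (F G : H →ₐ[C] T),
      φ.comp (add T F G) = add T' (φ.comp F) (φ.comp G))
    (hnegnat : ∀ (T T' : Type u) [CommRing T] [IsLocalRing T] [Algebra C T]
      [IsNoetherianRing T] [IsAdicComplete (maximalIdeal T) T] [CommRing T'] [IsLocalRing T']
      [Algebra C T'] [IsNoetherianRing T'] [IsAdicComplete (maximalIdeal T') T']
      (φ : T →ₐ[C] T') (F : H →ₐ[C] T), φ.comp (neg T F) = neg T' (φ.comp F))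
    -- the `A`-compatible sequence
    (F : ℕ → (H →ₐ[C] S))
    (hFloc : ∀ (m : ℕ), ∀ h ∈ maximalIdeal H, F m h ∈ maximalIdeal S)
    (hcompat : ∀ (m : ℕ) (h : H), ∃ s : S,
      (add S (F (m + 1)) (neg S (F m))) h = s ^ p ^ (m + 1))
    -- the limit `G` of the sequence
    (G : H →ₐ[C] S)
    (hlim : ∀ (m : ℕ) (h : H), G h - F m h ∈
      Ideal.span ((fun s : S => s ^ p ^ m) '' (maximalIdeal S : Set S)))
    -- `ω` is an invariant differential form of `A`
    (ω : Ω[H⁄C])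
    (hω : ∀ (T : Type u) [CommRing T] [IsLocalRing T] [Algebra C T] [IsNoetherianRing T]
      [IsAdicComplete (maximalIdeal T) T] (G₁ G₂ : H →ₐ[C] T)
      (φ₁ φ₂ φ₃ : Ω[H⁄C] →+ Ω[T⁄C]),
      IsPushforward C G₁ φ₁ → IsPushforward C G₂ φ₂ → IsPushforward C (add T G₁ G₂) φ₃ →
        φ₃ ω = φ₁ ω + φ₂ ω) :
    -- the limit and each term of the sequence act in the same way on `ω`
    ∀ (k : ℕ) (φG φk : Ω[H⁄C] →+ Ω[S⁄C]),
      IsPushforward C G φG → IsPushforward C (F k) φk → φG ω = φk ω :=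
  stmt16_general C p H S hresS ε add neg hneg F hcompat G hlim ω hω
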